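/- In the anticommutative algebra 𝒜₁^α (products e₁e₂ = e₃, e₁e₃ = e₁ + e₃, e₂e₃ = α·e₂), for t ≠ 0 the vectors E₁ᵗ = t·e₂, E₂ᵗ = -e₁, E₃ᵗ = α·e₁ - e₂ + e₃ form a basis whose structure constants are polynomial in t and specialize at t = 0 to those of 𝒜₂ (products e₁e₂ = e₁, e₂e₃ = e₂). -/
import Mathlib


/-- Anticommutative multiplication of `𝒜₁^α` on ℂ³ (basis `e₁,e₂,e₃` = indices
`0,1,2`): `e₁e₂ = e₃`, `e₁e₃ = e₁ + e₃`, `e₂e₃ = α·e₂`, extended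
anticommutatively, other basis products zero. -/
def mulA1 (α : ℂ) (x y : Fin 3 → ℂ) : Fin 3 → ℂ :=
  ![x 0 * y 2 - x 2 * y 0,
    α * (x 1 * y 2 - x 2 * y 1),
    (x 0 * y 1 - x 1 * y 0) + (x 0 * y 2 - x 2 * y 0)]

/-- Anticommutative multiplication of `𝒜₂` on ℂ³: `e₁e₂ = e₁`, `e₂e₃ = e₂`,
extended anticommutatively, other basis products zero. -/
def mulA2 (x y : Fin 3 → ℂ) : Fin 3 → ℂ :=
  ![x 0 * y 1 - x 1 * y 0, x 1 * y 2 - x 2 * y 1, 0]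

/-- The parametrized basis `E₁ᵗ = t·e₂`, `E₂ᵗ = -e₁`, `E₃ᵗ = α·e₁ - e₂ + e₃`. -/
def E11 (α t : ℂ) : Fin 3 → Fin 3 → ℂ :=
  ![![0, t, 0], ![-1, 0, 0], ![α, -1, 1]]

open Polynomial in
/-- Structure constants, as polynomials in `t`. -/
noncomputable def cStr (α : ℂ) : Fin 3 → Fin 3 → Fin 3 → Polynomial ℂ :=
  ![![![0, 0, 0], ![1, C α * X, X], ![0, -(C α ^ 2) * X, -(C α) * X]],
    ![![-1, -(C α) * X, -X], ![0, 0, 0], ![0, 1, 0]],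
    ![![0, C α ^ 2 * X, C α * X], ![0, -1, 0], ![0, 0, 0]]]

/-- `𝒜₁^α` degenerates to `𝒜₂`: for `t ≠ 0` the `Eᵢᵗ` form a basis in which the
structure constants of `𝒜₁^α` are polynomials in `t` specializing at `t = 0` to
those of `𝒜₂`. -/
theorem stmt_11 (α : ℂ) : ∃ c : Fin 3 → Fin 3 → Fin 3 → Polynomial ℂ,
    (∀ t : ℂ, t ≠ 0 → LinearIndependent ℂ (E11 α t) ∧
      ∀ i j, mulA1 α (E11 α t i) (E11 α t j) = ∑ k, (c i j k).eval t • E11 α t k) ∧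
    (∀ i j, mulA2 (Pi.single i 1) (Pi.single j 1)
      = ∑ k, (c i j k).eval 0 • (Pi.single k 1 : Fin 3 → ℂ)) := by
  refine ⟨cStr α, fun t ht => ⟨?_, ?_⟩, ?_⟩
  · have : IsUnit (Matrix.of (E11 α t)) := by
      rw [Matrix.isUnit_iff_isUnit_det]
      have hdet : (Matrix.of (E11 α t)).det = t := by
        simp [Matrix.det_fin_three, E11]
      rw [hdet]
      exact ht.isUnit
    exact Matrix.linearIndependent_rows_iff_isUnit.mpr this
  · intro i j
    fin_cases i <;> fin_cases j <;>
      · funext x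
        fin_cases x <;>
          simp [mulA1, E11, cStr, Fin.sum_univ_three] <;> ring
  · intro i j
    fin_cases i <;> fin_cases j <;>
      · funext x
        fin_cases x <;>
          simp [mulA2, cStr, Fin.sum_univ_three, Pi.single_apply]
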